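/- Fix n ≥ 2 and complex numbers q_{ij} (1 ≤ i, j ≤ n) with q_{ii} = 1, q_{ji} = q_{ij}^{-1} and |q_{ij}| = 1. Let K be a complex Hilbert space and a_1, …, a_n bounded operators on K. On F = ℓ²(Λ̃; K) let Ṽ_i be the isometry given by (Ṽ_i f)(iα) = f(α) and (Ṽ_i f)(β) = 0 when β does not begin with the letter i; let F_q = { f ∈ F : f(α ∘ σ^{-1}) = q^σ(α) f(α) for every word α of length m and every σ ∈ S_m, all m } (a closed subspace invariant under every Ṽ_i^* and under the pointwise operators â_i, where (â_i f)(α) = a_i(f(α))); let Q be the orthogonal projection of F onto F_q and G̃_i = Q(Ṽ_i + Ṽ_i^*)|_{F_q}. Then max( ‖Σ_{i=1}^n a_i a_i^*‖^{1/2}, ‖Σ_{i=1}^n a_i^* a_i‖^{1/2} ) ≤ ‖Σ_{i=1}^n â_i G̃_i‖_{B(F_q)} ≤ 2 · max( ‖Σ_{i=1}^n a_i a_i^*‖^{1/2}, ‖Σ_{i=1}^n a_i^* a_i‖^{1/2} ). -/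

import Mathlib

/-- `q^σ(x) = ∏ q_{x_{σ⁻¹(k)} x_{σ⁻¹(i)}}`, the product over all pairs `i < k`
with `σ⁻¹(i) > σ⁻¹(k)`. -/
noncomputable def qSigma {n : ℕ} (q : Fin n → Fin n → ℂ) {m : ℕ} (x : Fin m → Fin n)
    (σ : Equiv.Perm (Fin m)) : ℂ :=
  ∏ p ∈ Finset.univ.filter (fun p : Fin m × Fin m => p.1 < p.2 ∧ σ⁻¹ p.2 < σ⁻¹ p.1),
    q (x (σ⁻¹ p.2)) (x (σ⁻¹ p.1))

/-!
`Σ âᵢ G̃ᵢ` is the compression to `F_q` of `X = Σ âᵢ (Ṽᵢ + Ṽᵢ*)` on `ℓ²(Λ̃; K)`: the projection `Q`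
commutes with each `âᵢ`, since both `âᵢ` and `âᵢ*` (pointwise `aᵢ*`) leave `F_q` invariant.
The `Ṽᵢ` are isometries with orthogonal ranges commuting with the `âᵢ`, so `Σ âᵢ Ṽᵢ = Σ Ṽᵢ âᵢ`
has norm at most that of the column `ξ ↦ (aᵢ ξ)ᵢ`, namely `‖Σ aᵢ* aᵢ‖^{1/2}`, and the
annihilation part `Σ âᵢ Ṽᵢ*` is the adjoint of the creation part built from the `aᵢ*`; this is
the upper bound. For the lower bound, vectors supported on words of length at most one are
`q`-symmetric, the compression sends the vacuum vector `Ω ⊗ ξ` to `Σ eᵢ ⊗ aᵢ ξ`, and its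
adjoint, which is the same construction for the `aᵢ*`, sends it to `Σ eᵢ ⊗ aᵢ* ξ`.
-/

open scoped InnerProductSpace
open ContinuousLinearMap

section ColumnOperator

variable {ι : Type*} [Fintype ι]
variable {E G : Type*} [NormedAddCommGroup E] [InnerProductSpace ℂ E]
  [NormedAddCommGroup G] [InnerProductSpace ℂ G]

noncomputable def columnOp (b : ι → E →L[ℂ] G) : E →L[ℂ] PiLp 2 (fun _ : ι => G) :=
  (PiLp.continuousLinearEquiv 2 ℂ (fun _ : ι => G)).symm.toContinuousLinearMap ∘L pi b

lemma norm_columnOp_apply_sq (b : ι → E →L[ℂ] G) (x : E) :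
    ‖columnOp b x‖ ^ 2 = ∑ i, ‖b i x‖ ^ 2 :=
  PiLp.norm_sq_eq_of_L2 _ _

lemma adjoint_columnOp_comp_self [CompleteSpace E] [CompleteSpace G] (b : ι → E →L[ℂ] G) :
    adjoint (columnOp b) ∘L columnOp b = ∑ i, adjoint (b i) ∘L b i := by
  refine ext fun x => ext_inner_right ℂ fun y => ?_
  simp [columnOp, adjoint_inner_left, PiLp.inner_apply, sum_inner]

lemma sqrt_norm_sum_adjoint_comp_self [CompleteSpace E] [CompleteSpace G]
    (b : ι → E →L[ℂ] G) : √‖∑ i, adjoint (b i) ∘L b i‖ = ‖columnOp b‖ := by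
  rw [← adjoint_columnOp_comp_self, norm_adjoint_comp_self, Real.sqrt_mul_self (norm_nonneg _)]

end ColumnOperator

section Compression

variable {E : Type*} [NormedAddCommGroup E] [InnerProductSpace ℂ E]
  (U : Submodule ℂ E) [CompleteSpace U]

lemma Submodule.starProjection_apply_comm [CompleteSpace E] {X : E →L[ℂ] E}
    (hX : ∀ x ∈ U, X x ∈ U) (hX' : ∀ x ∈ U, adjoint X x ∈ U) (x : E) :
    U.starProjection (X x) = X (U.starProjection x) := by
  refine U.eq_starProjection_of_mem_of_inner_eq_zero (hX _ (U.starProjection_apply_mem x))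
    fun w hw => ?_
  rw [← map_sub, ← adjoint_inner_right, U.starProjection_inner_eq_zero _ _ (hX' w hw)]

lemma Submodule.adjoint_compression [CompleteSpace E] (X : E →L[ℂ] E) :
    adjoint (U.orthogonalProjectionOnto ∘L X ∘L U.subtypeL) =
      U.orthogonalProjectionOnto ∘L adjoint X ∘L U.subtypeL := by
  simp only [adjoint_comp, U.adjoint_subtypeL, U.adjoint_orthogonalProjectionOnto, comp_assoc]

lemma Submodule.norm_compression_le (X : E →L[ℂ] E) :
    ‖U.orthogonalProjectionOnto ∘L X ∘L U.subtypeL‖ ≤ ‖X‖ :=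
  calc _ ≤ ‖U.orthogonalProjectionOnto‖ * (‖X‖ * ‖U.subtypeL‖) :=
        (opNorm_comp_le _ _).trans (by gcongr; exact opNorm_comp_le _ _)
    _ ≤ 1 * (‖X‖ * 1) := by
        gcongr
        · exact U.orthogonalProjectionOnto_norm_le
        · exact U.norm_subtypeL_le
    _ = ‖X‖ := by ring

lemma Submodule.sum_codRestrict_mul_eq_compression [CompleteSpace E] {ι : Type*} [Fintype ι]
    (P Y : ι → E →L[ℂ] E) (hP : ∀ i, ∀ x ∈ U, P i x ∈ U) (hP' : ∀ i, ∀ x ∈ U, adjoint (P i) x ∈ U) :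
    ∑ i, ((P i).comp U.subtypeL).codRestrict U (fun x => hP i _ x.2) *
        (U.starProjection.codRestrict U U.starProjection_apply_mem).comp (Y i ∘L U.subtypeL) =
      U.orthogonalProjectionOnto ∘L (∑ i, P i ∘L Y i) ∘L U.subtypeL := by
  ext x
  simp only [FunLike.coe_sum, Finset.sum_apply, Submodule.coe_sum]
  change ∑ i, P i (U.starProjection (Y i x)) = U.starProjection ((∑ i, P i ∘L Y i) x)
  simp only [sum_apply, map_sum, comp_apply, U.starProjection_apply_comm (hP _) (hP' _)]

end Compression

lemma lp.hasSum_norm_sq {X : Type*} {E : X → Type*} [∀ i, NormedAddCommGroup (E i)]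
    (f : lp E 2) : HasSum (fun i => ‖f i‖ ^ 2) (‖f‖ ^ 2) := by
  simpa only [ENNReal.toReal_ofNat, Real.rpow_two] using lp.hasSum_norm (p := 2) (by norm_num) f

section Pointwise

variable {X K : Type*} [NormedAddCommGroup K] [InnerProductSpace ℂ K]

local notation "𝓁" => lp (fun _ : X => K) 2

def IsPointwise (P : 𝓁 →L[ℂ] 𝓁) (b : K →L[ℂ] K) : Prop :=
  ∀ f α, P f α = b (f α)

variable {P : lp (fun _ : X => K) 2 →L[ℂ] lp (fun _ : X => K) 2} {b : K →L[ℂ] K}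

lemma IsPointwise.map_single [DecidableEq X] (hP : IsPointwise P b) (α : X) (ξ : K) :
    P (lp.single 2 α ξ) = (lp.single 2 α (b ξ) : 𝓁) := by
  ext β
  rw [hP]
  obtain rfl | h := eq_or_ne β α
  · simp only [lp.single_apply_self]
  · simp only [lp.single_apply_ne _ _ _ h, map_zero]

lemma IsPointwise.adjoint [CompleteSpace K] (hP : IsPointwise P b) :
    IsPointwise (adjoint P) (adjoint b) := by
  classical
  intro f α
  refine ext_inner_right ℂ fun ξ => ?_
  rw [← lp.inner_single_right, adjoint_inner_left, hP.map_single, lp.inner_single_right,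
    adjoint_inner_left]

lemma IsPointwise.sum_norm_sq_apply_le {ι : Type*} [Fintype ι] {P : ι → 𝓁 →L[ℂ] 𝓁}
    {b : ι → K →L[ℂ] K} (hP : ∀ i, IsPointwise (P i) (b i)) (f : 𝓁) :
    ∑ i, ‖P i f‖ ^ 2 ≤ ‖columnOp b‖ ^ 2 * ‖f‖ ^ 2 := by
  have hPf : ∀ i, HasSum (fun α => ‖b i (f α)‖ ^ 2) (‖P i f‖ ^ 2) := fun i => by
    simpa only [hP i f] using lp.hasSum_norm_sq (P i f)
  have hf := lp.hasSum_norm_sq f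
  calc ∑ i, ‖P i f‖ ^ 2 = ∑' α, ‖columnOp b (f α)‖ ^ 2 := by
        simp only [norm_columnOp_apply_sq, Summable.tsum_finsetSum fun i _ => (hPf i).summable,
          (hPf _).tsum_eq]
    _ ≤ ∑' α, ‖columnOp b‖ ^ 2 * ‖f α‖ ^ 2 := by
        refine Summable.tsum_le_tsum (fun α => ?_) ?_ (hf.summable.mul_left _)
        · rw [← mul_pow]
          gcongr
          exact le_opNorm _ _
        · simpa only [norm_columnOp_apply_sq] using summable_sum fun i _ => (hPf i).summable
    _ = ‖columnOp b‖ ^ 2 * ‖f‖ ^ 2 := by rw [tsum_mul_left, hf.tsum_eq]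

end Pointwise

section Creation

variable {ι K : Type*} [NormedAddCommGroup K] [InnerProductSpace ℂ K]

local notation "𝓕" => lp (fun _ : List ι => K) 2

def IsLeftCreation (V : 𝓕 →L[ℂ] 𝓕) (i : ι) : Prop :=
  (∀ f α, V f (i :: α) = f α) ∧ ∀ f β, (∀ α, β ≠ i :: α) → V f β = 0

variable {V : lp (fun _ : List ι => K) 2 →L[ℂ] lp (fun _ : List ι => K) 2} {i : ι}

namespace IsLeftCreation

lemma apply_nil (hV : IsLeftCreation V i) (f : 𝓕) : V f [] = 0 :=
  hV.2 f [] fun _ => (List.cons_ne_nil _ _).symm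

lemma apply_cons_of_ne (hV : IsLeftCreation V i) {j : ι} (hj : j ≠ i) (f : 𝓕) (t : List ι) :
    V f (j :: t) = 0 :=
  hV.2 f _ fun _ h => hj (List.cons.inj h).1

lemma map_single [DecidableEq ι] (hV : IsLeftCreation V i) (α : List ι) (ξ : K) :
    V (lp.single 2 α ξ) = (lp.single 2 (i :: α) ξ : 𝓕) := by
  ext (_ | ⟨j, t⟩)
  · rw [hV.apply_nil, lp.single_apply_ne _ _ _ (List.cons_ne_nil _ _).symm]
  obtain rfl | hj := eq_or_ne j i
  · obtain rfl | ht := eq_or_ne t α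
    · rw [hV.1, lp.single_apply_self, lp.single_apply_self]
    · rw [hV.1, lp.single_apply_ne _ _ _ ht, lp.single_apply_ne _ _ _ (by simpa using ht)]
  · rw [hV.apply_cons_of_ne hj, lp.single_apply_ne _ _ _ (by simp [hj])]

variable [CompleteSpace K]

lemma adjoint_apply (hV : IsLeftCreation V i) (f : 𝓕) (α : List ι) :
    adjoint V f α = f (i :: α) := by
  classical
  refine ext_inner_right ℂ fun ξ => ?_
  rw [← lp.inner_single_right, ← lp.inner_single_right, adjoint_inner_left, hV.map_single]

lemma adjoint_map_single_nil [DecidableEq ι] (hV : IsLeftCreation V i) (ξ : K) :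
    adjoint V (lp.single 2 [] ξ) = 0 := by
  ext α
  rw [hV.adjoint_apply, lp.single_apply_ne _ _ _ (List.cons_ne_nil _ _)]
  rfl

lemma inner_apply_apply [DecidableEq ι] {W : 𝓕 →L[ℂ] 𝓕} {j : ι} (hV : IsLeftCreation V i)
    (hW : IsLeftCreation W j) (f g : 𝓕) :
    ⟪V f, W g⟫_ℂ = if i = j then ⟪f, g⟫_ℂ else 0 := by
  rw [← adjoint_inner_right]
  split_ifs with hij
  · congr 1
    ext α
    rw [hV.adjoint_apply, hij, hW.1]
  · convert inner_zero_right f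
    ext α
    rw [hV.adjoint_apply, hW.apply_cons_of_ne hij]
    rfl

end IsLeftCreation

variable {P : lp (fun _ : List ι => K) 2 →L[ℂ] lp (fun _ : List ι => K) 2} {b : K →L[ℂ] K}

lemma IsPointwise.comp_eq_comp_of_isLeftCreation (hP : IsPointwise P b)
    (hV : IsLeftCreation V i) : P ∘L V = V ∘L P := by
  ext f (_ | ⟨j, t⟩)
  · simp only [comp_apply, hP _ [], hV.apply_nil, map_zero]
  obtain rfl | hj := eq_or_ne j i
  · simp only [comp_apply, hP _ (j :: t), hV.1, hP f t]
  · simp only [comp_apply, hP _ (j :: t), hV.apply_cons_of_ne hj, map_zero]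

lemma IsPointwise.comp_adjoint_eq_adjoint_comp [CompleteSpace K] (hP : IsPointwise P b)
    (hV : IsLeftCreation V i) :
    P ∘L ContinuousLinearMap.adjoint V = ContinuousLinearMap.adjoint V ∘L P := by
  ext f α
  simp only [comp_apply, hP _ α, hV.adjoint_apply, hP f]

end Creation

section Families

variable {ι K : Type*} [NormedAddCommGroup K] [InnerProductSpace ℂ K] [CompleteSpace K]
  [Fintype ι] {V P : ι → lp (fun _ : List ι => K) 2 →L[ℂ] lp (fun _ : List ι => K) 2}
  {b : ι → K →L[ℂ] K}

local notation "𝓕" => lp (fun _ : List ι => K) 2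

lemma IsLeftCreation.norm_sum_apply_sq (hV : ∀ i, IsLeftCreation (V i) i) (g : ι → 𝓕) :
    ‖∑ i, V i (g i)‖ ^ 2 = ∑ i, ‖g i‖ ^ 2 := by
  classical
  have hisom : ∀ i x y, ⟪V i x, V i y⟫_ℂ = ⟪x, y⟫_ℂ := fun i x y => by
    simpa using (hV i).inner_apply_apply (hV i) x y
  have horth : OrthogonalFamily ℂ (fun _ : ι => 𝓕)
      fun i => (V i : 𝓕 →ₗ[ℂ] 𝓕).isometryOfInner (hisom i) := fun i j hij x y => by
    simpa [hij] using (hV i).inner_apply_apply (hV j) x y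
  simpa using horth.norm_sum g Finset.univ

lemma IsLeftCreation.norm_sum_comp_le_norm_columnOp (hV : ∀ i, IsLeftCreation (V i) i)
    (hP : ∀ i, IsPointwise (P i) (b i)) :
    ‖∑ i, V i ∘L P i‖ ≤ ‖columnOp b‖ := by
  refine opNorm_le_bound _ (norm_nonneg (columnOp b)) fun f => ?_
  refine (pow_le_pow_iff_left₀ (norm_nonneg _) (by positivity) two_ne_zero).mp ?_
  rw [sum_apply, mul_pow]
  simpa only [comp_apply, IsLeftCreation.norm_sum_apply_sq hV] using
    IsPointwise.sum_norm_sq_apply_le hP f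

noncomputable def gaussianSum (V P : ι → 𝓕 →L[ℂ] 𝓕) : 𝓕 →L[ℂ] 𝓕 :=
  ∑ i, P i ∘L (V i + adjoint (V i))

lemma gaussianSum_eq (hV : ∀ i, IsLeftCreation (V i) i)
    (hP : ∀ i, IsPointwise (P i) (b i)) :
    gaussianSum V P = ∑ i, V i ∘L P i + adjoint (∑ i, V i ∘L adjoint (P i)) := by
  simp only [gaussianSum, comp_add, Finset.sum_add_distrib, map_sum, adjoint_comp,
    adjoint_adjoint, (hP _).comp_eq_comp_of_isLeftCreation (hV _)]

lemma norm_gaussianSum_le (hV : ∀ i, IsLeftCreation (V i) i)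
    (hP : ∀ i, IsPointwise (P i) (b i)) :
    ‖gaussianSum V P‖ ≤ ‖columnOp b‖ + ‖columnOp fun i => adjoint (b i)‖ := by
  rw [gaussianSum_eq hV hP]
  refine (norm_add_le _ _).trans
    (add_le_add (IsLeftCreation.norm_sum_comp_le_norm_columnOp hV hP) ?_)
  rw [LinearIsometryEquiv.norm_map]
  exact IsLeftCreation.norm_sum_comp_le_norm_columnOp hV fun i => (hP i).adjoint

lemma adjoint_gaussianSum (hV : ∀ i, IsLeftCreation (V i) i)
    (hP : ∀ i, IsPointwise (P i) (b i)) :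
    adjoint (gaussianSum V P) = gaussianSum V fun i => adjoint (P i) := by
  simp only [gaussianSum, map_sum, adjoint_comp, map_add, adjoint_adjoint]
  refine Finset.sum_congr rfl fun i _ => ?_
  rw [add_comp, comp_add, (hP i).adjoint.comp_eq_comp_of_isLeftCreation (hV i),
    (hP i).adjoint.comp_adjoint_eq_adjoint_comp (hV i), add_comm]

lemma gaussianSum_single_nil [DecidableEq ι] (hV : ∀ i, IsLeftCreation (V i) i)
    (hP : ∀ i, IsPointwise (P i) (b i)) (ξ : K) :
    gaussianSum V P (lp.single 2 [] ξ) = ∑ i, V i (lp.single 2 [] (b i ξ)) := by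
  refine (sum_apply _ _ _).trans (Finset.sum_congr rfl fun i _ => ?_)
  rw [comp_apply, add_apply, (hV i).adjoint_map_single_nil, add_zero, ← comp_apply,
    (hP i).comp_eq_comp_of_isLeftCreation (hV i), comp_apply, (hP i).map_single]

lemma norm_columnOp_le_norm_compression [DecidableEq ι]
    (hV : ∀ i, IsLeftCreation (V i) i) (hP : ∀ i, IsPointwise (P i) (b i))
    (U : Submodule ℂ 𝓕) [CompleteSpace U]
    (hU : ∀ f : 𝓕, (∀ w : List ι, 2 ≤ w.length → f w = 0) → f ∈ U) :
    ‖columnOp b‖ ≤ ‖U.orthogonalProjectionOnto ∘L gaussianSum V P ∘L U.subtypeL‖ := by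
  set T := U.orthogonalProjectionOnto ∘L gaussianSum V P ∘L U.subtypeL
  refine opNorm_le_bound _ (norm_nonneg T) fun ξ => ?_
  have hvac : (lp.single 2 [] ξ : 𝓕) ∈ U :=
    hU _ fun w hw => lp.single_apply_ne _ _ _ (by rintro rfl; simp at hw)
  have hone : ∑ i, V i (lp.single 2 [] (b i ξ)) ∈ U := by
    refine hU _ fun w hw => ?_
    simp only [(hV _).map_single, lp.coeFn_sum, Finset.sum_apply]
    exact Finset.sum_eq_zero fun i _ => lp.single_apply_ne _ _ _ (by rintro rfl; simp at hw)
  have hTv : T ⟨_, hvac⟩ = ⟨_, hone⟩ := by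
    change U.orthogonalProjectionOnto (gaussianSum V P (lp.single 2 [] ξ)) = _
    rw [gaussianSum_single_nil hV hP]
    exact U.orthogonalProjectionOnto_mem_subspace_eq_self ⟨_, hone⟩
  calc ‖columnOp b ξ‖ = ‖T ⟨_, hvac⟩‖ := by
        rw [hTv, ← sq_eq_sq₀ (norm_nonneg _) (norm_nonneg _), norm_columnOp_apply_sq,
          Submodule.coe_norm, IsLeftCreation.norm_sum_apply_sq hV]
        simp only [lp.norm_single two_pos]
    _ ≤ ‖T‖ * ‖(⟨_, hvac⟩ : U)‖ := le_opNorm _ _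
    _ = ‖T‖ * ‖ξ‖ := by rw [Submodule.coe_norm, lp.norm_single two_pos]

end Families

section QSymmetric

variable {n : ℕ} (q : Fin n → Fin n → ℂ)

def IsQSymmetric {K : Type*} [SMul ℂ K] (f : List (Fin n) → K) : Prop :=
  ∀ (m : ℕ) (α : Fin m → Fin n) (σ : Equiv.Perm (Fin m)),
    f (List.ofFn fun i => α (σ⁻¹ i)) = qSigma q α σ • f (List.ofFn α)

lemma qSigma_one {m : ℕ} (α : Fin m → Fin n) : qSigma q α 1 = 1 := by
  unfold qSigma
  rw [Finset.filter_false_of_mem fun p _ h => lt_asymm h.1 (by simpa using h.2), Finset.prod_empty]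

lemma isQSymmetric_of_length_le_one {K : Type*} [AddCommGroup K] [Module ℂ K]
    {f : List (Fin n) → K} (hf : ∀ w, 2 ≤ w.length → f w = 0) : IsQSymmetric q f := by
  intro m α σ
  rcases le_or_gt m 1 with hm | hm
  · have : Subsingleton (Fin m) := Fin.subsingleton_iff_le_one.mpr hm
    simp [Subsingleton.elim σ 1, qSigma_one]
  · rw [hf _ (by rw [List.length_ofFn]; exact hm), hf _ (by rw [List.length_ofFn]; exact hm),
      smul_zero]

lemma IsPointwise.isQSymmetric_apply {K : Type*} [NormedAddCommGroup K] [InnerProductSpace ℂ K]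
    {P : lp (fun _ : List (Fin n) => K) 2 →L[ℂ] lp (fun _ : List (Fin n) => K) 2}
    {b : K →L[ℂ] K} (hP : IsPointwise P b) {f : lp (fun _ : List (Fin n) => K) 2}
    (hf : IsQSymmetric q f) : IsQSymmetric q (P f) := fun m α σ => by
  simp only [hP f, hf m α σ, map_smul]

end QSymmetric

theorem stmt19_general {K : Type*} [NormedAddCommGroup K] [InnerProductSpace ℂ K] [CompleteSpace K]
    {n : ℕ} (q : Fin n → Fin n → ℂ)
    (a : Fin n → K →L[ℂ] K)
    -- the ampliated creation operators `Ṽ_i` on `F = ℓ²(Λ̃; K)`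
    (Vt : Fin n → lp (fun _ : List (Fin n) => K) 2 →L[ℂ] lp (fun _ : List (Fin n) => K) 2)
    (hVt1 : ∀ (i : Fin n) (f : lp (fun _ : List (Fin n) => K) 2) (α : List (Fin n)),
      Vt i f (i :: α) = f α)
    (hVt2 : ∀ (i : Fin n) (f : lp (fun _ : List (Fin n) => K) 2) (β : List (Fin n)),
      (∀ α : List (Fin n), β ≠ i :: α) → Vt i f β = 0)
    -- the subspace `F_q ≅ Γ_q(ℂⁿ) ⊗ K` of `q`-symmetric functions
    (Fq : Submodule ℂ (lp (fun _ : List (Fin n) => K) 2)) [CompleteSpace ↥Fq]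
    (hFq : (Fq : Set (lp (fun _ : List (Fin n) => K) 2))
      = {f | ∀ (m : ℕ) (α : Fin m → Fin n) (σ : Equiv.Perm (Fin m)),
          f (List.ofFn fun i => α (σ⁻¹ i)) = qSigma q α σ • f (List.ofFn α)})
    -- the pointwise operators `â_i`, which leave `F_q` invariant
    (ahat : Fin n → lp (fun _ : List (Fin n) => K) 2 →L[ℂ] lp (fun _ : List (Fin n) => K) 2)
    (hahat : ∀ (i : Fin n) (f : lp (fun _ : List (Fin n) => K) 2) (α : List (Fin n)),
      ahat i f α = a i (f α))
    (hainv : ∀ (i : Fin n), ∀ f ∈ Fq, ahat i f ∈ Fq)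
    -- the orthogonal projection `Q` of `F` onto `F_q`
    (Q : lp (fun _ : List (Fin n) => K) 2 →L[ℂ] lp (fun _ : List (Fin n) => K) 2)
    (hQmem : ∀ x, Q x ∈ Fq)
    (hQorth : ∀ x, ∀ y ∈ Fq, (inner ℂ (x - Q x) y : ℂ) = 0) :
    letI Gt : Fin n → ↥Fq →L[ℂ] ↥Fq := fun i =>
      (Q.codRestrict Fq hQmem).comp
        (((Vt i + ContinuousLinearMap.adjoint (Vt i)).comp Fq.subtypeL))
    letI aRes : Fin n → ↥Fq →L[ℂ] ↥Fq := fun i =>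
      ((ahat i).comp Fq.subtypeL).codRestrict Fq (fun x => hainv i _ x.2)
    max (Real.sqrt ‖∑ i, a i * ContinuousLinearMap.adjoint (a i)‖)
        (Real.sqrt ‖∑ i, ContinuousLinearMap.adjoint (a i) * a i‖)
      ≤ ‖∑ i, aRes i * Gt i‖ ∧
    ‖∑ i, aRes i * Gt i‖
      ≤ 2 * max (Real.sqrt ‖∑ i, a i * ContinuousLinearMap.adjoint (a i)‖)
          (Real.sqrt ‖∑ i, ContinuousLinearMap.adjoint (a i) * a i‖) := by
  beta_reduce
  obtain rfl : Q = Fq.starProjection := ext fun x =>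
    (Fq.eq_starProjection_of_mem_of_inner_eq_zero (hQmem x) (hQorth x)).symm
  have hV : ∀ i, IsLeftCreation (Vt i) i := fun i => ⟨hVt1 i, hVt2 i⟩
  have hP : ∀ i, IsPointwise (ahat i) (a i) := hahat
  have hmem : ∀ f, f ∈ Fq ↔ IsQSymmetric q f := fun f => by rw [← SetLike.mem_coe, hFq]; rfl
  have hshort : ∀ f : lp (fun _ : List (Fin n) => K) 2,
      (∀ w : List (Fin n), 2 ≤ w.length → f w = 0) → f ∈ Fq :=
    fun f hf => (hmem f).2 (isQSymmetric_of_length_le_one q hf)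
  have hainv_adjoint : ∀ i, ∀ f ∈ Fq, adjoint (ahat i) f ∈ Fq := fun i f hf =>
    (hmem _).2 ((hP i).adjoint.isQSymmetric_apply q ((hmem f).1 hf))
  rw [Fq.sum_codRestrict_mul_eq_compression ahat (fun i => Vt i + adjoint (Vt i)) hainv
    hainv_adjoint]
  set T := Fq.orthogonalProjectionOnto ∘L gaussianSum Vt ahat ∘L Fq.subtypeL
  have hcol : ‖columnOp a‖ ≤ ‖T‖ := norm_columnOp_le_norm_compression hV hP Fq hshort
  have hrow : ‖columnOp fun i => adjoint (a i)‖ ≤ ‖T‖ := by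
    rw [← LinearIsometryEquiv.norm_map adjoint T, Fq.adjoint_compression,
      adjoint_gaussianSum hV hP]
    exact norm_columnOp_le_norm_compression hV (fun i => (hP i).adjoint) Fq hshort
  have hup : ‖T‖ ≤ ‖columnOp a‖ + ‖columnOp fun i => adjoint (a i)‖ :=
    (Fq.norm_compression_le _).trans (norm_gaussianSum_le hV hP)
  have hcol_eq : √‖∑ i, adjoint (a i) * a i‖ = ‖columnOp a‖ :=
    sqrt_norm_sum_adjoint_comp_self a
  have hrow_eq : √‖∑ i, a i * adjoint (a i)‖ = ‖columnOp fun i => adjoint (a i)‖ := by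
    simpa only [adjoint_adjoint, mul_def] using
      sqrt_norm_sum_adjoint_comp_self fun i => adjoint (a i)
  rw [hcol_eq, hrow_eq]
  exact ⟨max_le hrow hcol,
    hup.trans ((add_le_add (le_max_right _ _) (le_max_left _ _)).trans_eq (two_mul _).symm)⟩

/-- The two-sided norm estimate expressing that the operator space spanned by
`G_1, …, G_n` (`G_i = S_i + S_i^*` on the `q`-commuting Fock space) is completely
isomorphic to the Hilbertian operator space `E_n`:
`max(‖Σ a_i a_i^*‖^{1/2}, ‖Σ a_i^* a_i‖^{1/2}) ≤ ‖Σ a_i ⊗ G_i‖ ≤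
 2 max(‖Σ a_i a_i^*‖^{1/2}, ‖Σ a_i^* a_i‖^{1/2})`,
realized on `F_q ≅ Γ_q(ℂⁿ) ⊗ K ⊆ ℓ²(Λ̃; K)`. -/
theorem stmt19 {K : Type*} [NormedAddCommGroup K] [InnerProductSpace ℂ K] [CompleteSpace K]
    {n : ℕ} (hn : 2 ≤ n) (q : Fin n → Fin n → ℂ)
    (hq1 : ∀ i, q i i = 1) (hq2 : ∀ i j, q j i = (q i j)⁻¹) (hq3 : ∀ i j, ‖q i j‖ = 1)
    (a : Fin n → K →L[ℂ] K)
    -- the ampliated creation operators `Ṽ_i` on `F = ℓ²(Λ̃; K)`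
    (Vt : Fin n → lp (fun _ : List (Fin n) => K) 2 →L[ℂ] lp (fun _ : List (Fin n) => K) 2)
    (hVt1 : ∀ (i : Fin n) (f : lp (fun _ : List (Fin n) => K) 2) (α : List (Fin n)),
      Vt i f (i :: α) = f α)
    (hVt2 : ∀ (i : Fin n) (f : lp (fun _ : List (Fin n) => K) 2) (β : List (Fin n)),
      (∀ α : List (Fin n), β ≠ i :: α) → Vt i f β = 0)
    -- the subspace `F_q ≅ Γ_q(ℂⁿ) ⊗ K` of `q`-symmetric functions
    (Fq : Submodule ℂ (lp (fun _ : List (Fin n) => K) 2)) [CompleteSpace ↥Fq]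
    (hFq : (Fq : Set (lp (fun _ : List (Fin n) => K) 2))
      = {f | ∀ (m : ℕ) (α : Fin m → Fin n) (σ : Equiv.Perm (Fin m)),
          f (List.ofFn fun i => α (σ⁻¹ i)) = qSigma q α σ • f (List.ofFn α)})
    (hVinv : ∀ (i : Fin n), ∀ f ∈ Fq, ContinuousLinearMap.adjoint (Vt i) f ∈ Fq)
    -- the pointwise operators `â_i`, which leave `F_q` invariant
    (ahat : Fin n → lp (fun _ : List (Fin n) => K) 2 →L[ℂ] lp (fun _ : List (Fin n) => K) 2)
    (hahat : ∀ (i : Fin n) (f : lp (fun _ : List (Fin n) => K) 2) (α : List (Fin n)),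
      ahat i f α = a i (f α))
    (hainv : ∀ (i : Fin n), ∀ f ∈ Fq, ahat i f ∈ Fq)
    -- the orthogonal projection `Q` of `F` onto `F_q`
    (Q : lp (fun _ : List (Fin n) => K) 2 →L[ℂ] lp (fun _ : List (Fin n) => K) 2)
    (hQmem : ∀ x, Q x ∈ Fq) (hQfix : ∀ x ∈ Fq, Q x = x)
    (hQorth : ∀ x, ∀ y ∈ Fq, (inner ℂ (x - Q x) y : ℂ) = 0) :
    letI Gt : Fin n → ↥Fq →L[ℂ] ↥Fq := fun i =>
      (Q.codRestrict Fq hQmem).comp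
        (((Vt i + ContinuousLinearMap.adjoint (Vt i)).comp Fq.subtypeL))
    letI aRes : Fin n → ↥Fq →L[ℂ] ↥Fq := fun i =>
      ((ahat i).comp Fq.subtypeL).codRestrict Fq (fun x => hainv i _ x.2)
    max (Real.sqrt ‖∑ i, a i * ContinuousLinearMap.adjoint (a i)‖)
        (Real.sqrt ‖∑ i, ContinuousLinearMap.adjoint (a i) * a i‖)
      ≤ ‖∑ i, aRes i * Gt i‖ ∧
    ‖∑ i, aRes i * Gt i‖
      ≤ 2 * max (Real.sqrt ‖∑ i, a i * ContinuousLinearMap.adjoint (a i)‖)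
          (Real.sqrt ‖∑ i, ContinuousLinearMap.adjoint (a i) * a i‖) :=
  stmt19_general q a Vt hVt1 hVt2 Fq hFq ahat hahat hainv Q hQmem hQorth
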